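/- arXiv:2305.01450 — 3 statements merged into one kernel-verified Lean document; each statement's English description precedes it below -/
import Mathlib

section
/- Let L be a finite set of d distinct lines in the complex projective plane ℙ²(ℂ), with d ≥ 5, and assume that no point of ℙ²(ℂ) lies on at least d−1 of the lines of L. Then the total Milnor number of the arrangement satisfies μ(L) = Σ_p (m_p − 1)² ≤ d² − 4d + 7, where the sum runs over all points p lying on at least two lines of L; equivalently, (d−1)(d−2) + 1 − μ(L) ≥ d − 4 ≥ 1. -/
/-! The counting uses only that two distinct lines meet in exactly one point. Counting pairs of
distinct lines by their meeting point gives `∑ m_p (m_p - 1) = d (d - 1)`, and counting the other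
lines by where they meet a fixed line `ℓ` gives `∑_{p ∈ ℓ} (m_p - 1) = d - 1`. Hence
`μ = d (d - 1) - N` with `N = ∑ (m_p - 1)`, and it suffices to show `N ≥ 3d - 7`. If some point
`q` has multiplicity `3 ≤ m ≤ d - 2`, the `m` lines through `q` carry, away from `q`, disjoint sets
of multiple points contributing `d - m` each, so `N ≥ (m - 1) + m (d - m) ≥ 3d - 7`. Otherwise
every multiple point is double and `N = d (d - 1) / 2 ≥ 3d - 7`. -/

/- The number of lines of the arrangement `L` passing through the point `p` of the
complex projective plane. Lines in `ℙ²(ℂ)` are identified with `2`-dimensional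
linear subspaces of `ℂ³`, and a point lies on a line iff the line (as a subspace)
contains the `1`-dimensional subspace attached to the point. -/
open Classical in
noncomputable def lineMult (L : Finset (Submodule ℂ (Fin 3 → ℂ)))
    (p : Projectivization ℂ (Fin 3 → ℂ)) : ℕ :=
  (L.filter fun W => p.submodule ≤ W).card

open Module Finset

namespace Incidence

variable {α β : Type*}

open Classical in
noncomputable def mult (I : α → β → Prop) (L : Finset β) (p : α) : ℕ := #(L.filter (I p))

def MeetsUniquely (I : α → β → Prop) (L : Finset β) : Prop :=
  ∀ ℓ₁ ∈ L, ∀ ℓ₂ ∈ L, ℓ₁ ≠ ℓ₂ → ∃! p, I p ℓ₁ ∧ I p ℓ₂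

variable {I : α → β → Prop} {L : Finset β} {P : Finset α}

theorem eq_of_incident (hI : MeetsUniquely I L)
    {ℓ₁ ℓ₂ : β} (h₁ : ℓ₁ ∈ L) (h₂ : ℓ₂ ∈ L) (hne : ℓ₁ ≠ ℓ₂) {p q : α}
    (hp₁ : I p ℓ₁) (hp₂ : I p ℓ₂) (hq₁ : I q ℓ₁) (hq₂ : I q ℓ₂) : p = q :=
  (hI ℓ₁ h₁ ℓ₂ h₂ hne).unique ⟨hp₁, hp₂⟩ ⟨hq₁, hq₂⟩

theorem two_le_mult_iff {p : α} :
    2 ≤ mult I L p ↔ ∃ ℓ₁ ∈ L, ∃ ℓ₂ ∈ L, ℓ₁ ≠ ℓ₂ ∧ I p ℓ₁ ∧ I p ℓ₂ := by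
  classical
  change 1 < _ ↔ _
  simp only [mult, one_lt_card, mem_filter]
  constructor
  · rintro ⟨ℓ₁, ⟨h₁, hp₁⟩, ℓ₂, ⟨h₂, hp₂⟩, hne⟩
    exact ⟨ℓ₁, h₁, ℓ₂, h₂, hne, hp₁, hp₂⟩
  · rintro ⟨ℓ₁, h₁, ℓ₂, h₂, hne, hp₁, hp₂⟩
    exact ⟨ℓ₁, ⟨h₁, hp₁⟩, ℓ₂, ⟨h₂, hp₂⟩, hne⟩

theorem finite_setOf_two_le_mult (hI : MeetsUniquely I L) :
    {p | 2 ≤ mult I L p}.Finite := by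
  classical
  refine Set.Finite.subset (L.offDiag.finite_toSet.biUnion (t := fun ℓ => {p | I p ℓ.1 ∧ I p ℓ.2})
    fun ℓ hℓ => ?_) fun p hp => ?_
  · obtain ⟨h₁, h₂, hne⟩ := mem_offDiag.1 hℓ
    exact Set.Subsingleton.finite fun p hp q hq => (hI _ h₁ _ h₂ hne).unique hp hq
  · obtain ⟨ℓ₁, h₁, ℓ₂, h₂, hne, hp₁, hp₂⟩ := two_le_mult_iff.1 hp
    exact Set.mem_biUnion (x := (ℓ₁, ℓ₂)) (mem_offDiag.2 ⟨h₁, h₂, hne⟩) ⟨hp₁, hp₂⟩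

theorem sum_mult_mul_mult_sub_one (hI : MeetsUniquely I L) (hP : ∀ p, p ∈ P ↔ 2 ≤ mult I L p) :
    ∑ p ∈ P, mult I L p * (mult I L p - 1) = #L * (#L - 1) := by
  classical
  have hcover : L.offDiag = P.biUnion fun p => (L.filter (I p)).offDiag := by
    ext ⟨ℓ₁, ℓ₂⟩
    simp only [mem_offDiag, mem_biUnion, mem_filter]
    constructor
    · rintro ⟨h₁, h₂, hne⟩
      obtain ⟨p, ⟨hp₁, hp₂⟩, -⟩ := hI ℓ₁ h₁ ℓ₂ h₂ hne
      exact ⟨p, (hP p).2 (two_le_mult_iff.2 ⟨ℓ₁, h₁, ℓ₂, h₂, hne, hp₁, hp₂⟩),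
        ⟨h₁, hp₁⟩, ⟨h₂, hp₂⟩, hne⟩
    · rintro ⟨p, -, ⟨h₁, -⟩, ⟨h₂, -⟩, hne⟩
      exact ⟨h₁, h₂, hne⟩
  have hdisj : (P : Set α).PairwiseDisjoint fun p => (L.filter (I p)).offDiag := by
    intro p _ q _ hpq
    refine disjoint_left.2 fun ⟨ℓ₁, ℓ₂⟩ hp hq => hpq ?_
    simp only [mem_offDiag, mem_filter] at hp hq
    exact eq_of_incident hI hp.1.1 hp.2.1.1 hp.2.2 hp.1.2 hp.2.1.2 hq.1.2 hq.2.1.2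
  rw [Nat.mul_sub_one, ← offDiag_card, hcover, card_biUnion hdisj]
  simp only [offDiag_card, Nat.mul_sub_one, mult]

open Classical in
theorem sum_filter_mult_sub_one
    (hI : MeetsUniquely I L) (hP : ∀ p, p ∈ P ↔ 2 ≤ mult I L p) {ℓ : β} (hℓ : ℓ ∈ L) :
    ∑ p ∈ P.filter (I · ℓ), (mult I L p - 1) = #L - 1 := by
  classical
  have hcover : L.erase ℓ = (P.filter (I · ℓ)).biUnion fun p => (L.filter (I p)).erase ℓ := by
    ext ℓ'
    simp only [mem_erase, mem_biUnion, mem_filter]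
    constructor
    · rintro ⟨hne, h'⟩
      obtain ⟨p, ⟨hp', hp⟩, -⟩ := hI ℓ' h' ℓ hℓ hne
      exact ⟨p, ⟨(hP p).2 (two_le_mult_iff.2 ⟨ℓ', h', ℓ, hℓ, hne, hp', hp⟩), hp⟩, hne, h', hp'⟩
    · rintro ⟨p, -, hne, h', -⟩
      exact ⟨hne, h'⟩
  have hdisj : ((P.filter (I · ℓ) : Finset α) : Set α).PairwiseDisjoint
      fun p => (L.filter (I p)).erase ℓ := by
    intro p hp q hq hpq
    refine disjoint_left.2 fun ℓ' hp' hq' => hpq ?_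
    simp only [coe_filter, Set.mem_ofPred_eq, mem_erase, mem_filter] at hp hq hp' hq'
    exact eq_of_incident hI hp'.2.1 hℓ hp'.1 hp'.2.2 hp.2 hq'.2.2 hq.2
  rw [← card_erase_of_mem hℓ, hcover, card_biUnion hdisj]
  refine sum_congr rfl fun p hp => ?_
  rw [card_erase_of_mem (mem_filter.2 ⟨hℓ, (mem_filter.1 hp).2⟩), mult]

theorem mult_sub_one_add_mul_le_sum
    (hI : MeetsUniquely I L) (hP : ∀ p, p ∈ P ↔ 2 ≤ mult I L p) {q : α} (hq : q ∈ P) :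
    mult I L q - 1 + mult I L q * (#L - mult I L q) ≤ ∑ p ∈ P, (mult I L p - 1) := by
  classical
  set T := (L.filter (I q)).biUnion fun ℓ => (P.filter (I · ℓ)).erase q
  have hdisj : ((L.filter (I q) : Finset β) : Set β).PairwiseDisjoint
      fun ℓ => (P.filter (I · ℓ)).erase q := by
    intro ℓ₁ h₁ ℓ₂ h₂ hne
    refine disjoint_left.2 fun p hp₁ hp₂ => ?_
    simp only [coe_filter, Set.mem_ofPred_eq, mem_erase, mem_filter] at h₁ h₂ hp₁ hp₂
    exact hp₁.1 (eq_of_incident hI h₁.1 h₂.1 hne hp₁.2.2 hp₂.2.2 h₁.2 h₂.2)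
  have hline : ∀ ℓ ∈ L.filter (I q),
      ∑ p ∈ (P.filter (I · ℓ)).erase q, (mult I L p - 1) = #L - mult I L q := by
    intro ℓ hℓ
    rw [mem_filter] at hℓ
    have h : mult I L q - 1 + ∑ p ∈ (P.filter (I · ℓ)).erase q, (mult I L p - 1) =
        ∑ p ∈ P.filter (I · ℓ), (mult I L p - 1) :=
      add_sum_erase _ (fun p => mult I L p - 1) (mem_filter.2 ⟨hq, hℓ.2⟩)
    rw [sum_filter_mult_sub_one hI hP hℓ.1] at h
    have := (hP q).1 hq
    omega
  have hT : ∑ p ∈ T, (mult I L p - 1) = mult I L q * (#L - mult I L q) := by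
    rw [sum_biUnion hdisj, sum_congr rfl hline, sum_const, smul_eq_mul, mult]
  have hqT : q ∉ T := by simp [T]
  have hsub : insert q T ⊆ P := by
    refine insert_subset hq fun p hp => ?_
    obtain ⟨ℓ, -, hp⟩ := mem_biUnion.1 hp
    exact (mem_filter.1 (mem_erase.1 hp).2).1
  calc mult I L q - 1 + mult I L q * (#L - mult I L q) = ∑ p ∈ insert q T, (mult I L p - 1) := by
        rw [sum_insert hqT, hT]
    _ ≤ ∑ p ∈ P, (mult I L p - 1) := sum_le_sum_of_subset hsub

theorem three_mul_card_le_sum_mult_sub_one_add_seven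
    (hI : MeetsUniquely I L) (hP : ∀ p, p ∈ P ↔ 2 ≤ mult I L p)
    (hL : 5 ≤ #L) (hmult : ∀ p, mult I L p < #L - 1) :
    3 * #L ≤ ∑ p ∈ P, (mult I L p - 1) + 7 := by
  by_cases htriple : ∃ q ∈ P, 3 ≤ mult I L q
  · obtain ⟨q, hq, h3⟩ := htriple
    have hpencil := mult_sub_one_add_mul_le_sum hI hP hq
    have hq_lt := hmult q
    zify [(by omega : 1 ≤ mult I L q), (by omega : mult I L q ≤ #L)] at hpencil hq_lt ⊢
    -- `(m - 1) + m (d - m) - (3d - 7) = (m - 3)(d - 2 - m)`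
    nlinarith [mul_nonneg (sub_nonneg.2 (by exact_mod_cast h3 : (3 : ℤ) ≤ mult I L q))
      (by omega : (0 : ℤ) ≤ #L - 2 - mult I L q)]
  · push Not at htriple
    have hdouble : ∀ p ∈ P, mult I L p = 2 := fun p hp => by
      have := (hP p).1 hp
      have := htriple p hp
      omega
    have hpairs := sum_mult_mul_mult_sub_one hI hP
    rw [sum_congr rfl fun p hp => by rw [hdouble p hp], sum_const, smul_eq_mul] at hpairs
    rw [sum_congr rfl fun p hp => by rw [hdouble p hp], sum_const, smul_eq_mul]
    obtain ⟨e, he⟩ : ∃ e, #L = e + 1 := ⟨#L - 1, by omega⟩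
    rw [he, Nat.add_sub_cancel] at hpairs
    rw [he]
    nlinarith

theorem sum_sq_mult_sub_one_le
    (hI : MeetsUniquely I L) (hP : ∀ p, p ∈ P ↔ 2 ≤ mult I L p)
    (hL : 5 ≤ #L) (hmult : ∀ p, mult I L p < #L - 1) :
    ∑ p ∈ P, ((mult I L p : ℤ) - 1) ^ 2 ≤ (#L : ℤ) ^ 2 - 4 * #L + 7 := by
  have hsplit : ∑ p ∈ P, ((mult I L p : ℤ) - 1) ^ 2 =
      ((∑ p ∈ P, mult I L p * (mult I L p - 1) : ℕ) : ℤ) -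
        ((∑ p ∈ P, (mult I L p - 1) : ℕ) : ℤ) := by
    rw [Nat.cast_sum, Nat.cast_sum, ← sum_sub_distrib]
    refine sum_congr rfl fun p hp => ?_
    have := (hP p).1 hp
    push_cast [Nat.cast_sub (by omega : 1 ≤ mult I L p)]
    ring
  have hbound := three_mul_card_le_sum_mult_sub_one_add_seven hI hP hL hmult
  rw [hsplit, sum_mult_mul_mult_sub_one hI hP]
  zify [(by omega : 1 ≤ #L)] at hbound ⊢
  linarith

end Incidence

open scoped LinearAlgebra.Projectivization

namespace Projectivization

variable {K V : Type*} [Field K] [AddCommGroup V] [Module K V]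

theorem finrank_inf_eq_one_of_finrank_eq_two (hV : finrank K V = 3) {W₁ W₂ : Submodule K V}
    (h₁ : finrank K W₁ = 2) (h₂ : finrank K W₂ = 2) (hne : W₁ ≠ W₂) :
    finrank K ↥(W₁ ⊓ W₂) = 1 := by
  have : FiniteDimensional K V := .of_finrank_pos (by omega)
  have hsup_le : finrank K ↥(W₁ ⊔ W₂) ≤ 3 := hV ▸ Submodule.finrank_le _
  have hlt : finrank K W₁ < finrank K ↥(W₁ ⊔ W₂) := by
    refine Submodule.finrank_lt_finrank_of_lt (lt_of_le_of_ne le_sup_left fun h => hne ?_)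
    exact (Submodule.eq_of_le_of_finrank_eq (h ▸ le_sup_right) (by rw [h₁, h₂])).symm
  have := Submodule.finrank_sup_add_finrank_inf_eq W₁ W₂
  omega

theorem existsUnique_submodule_le_inf (hV : finrank K V = 3) {W₁ W₂ : Submodule K V}
    (h₁ : finrank K W₁ = 2) (h₂ : finrank K W₂ = 2) (hne : W₁ ≠ W₂) :
    ∃! p : ℙ K V, p.submodule ≤ W₁ ∧ p.submodule ≤ W₂ := by
  have h := finrank_inf_eq_one_of_finrank_eq_two hV h₁ h₂ hne
  have : FiniteDimensional K ↥(W₁ ⊓ W₂) := .of_finrank_pos (by omega)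
  have hmk := submodule_mk'' _ h
  refine ⟨mk'' _ h, ⟨hmk.le.trans inf_le_left, hmk.le.trans inf_le_right⟩, fun p hp => ?_⟩
  refine submodule_injective (.trans ?_ hmk.symm)
  exact Submodule.eq_of_le_of_finrank_eq (le_inf hp.1 hp.2) (by rw [p.finrank_submodule, h])

end Projectivization

/-- Let `L` be a finite set of `d` distinct lines in `ℙ²(ℂ)`, `d ≥ 5`,
such that no point lies on at least `d - 1` of the lines. Then the set of points lying
on at least two lines is finite and the total Milnor number
`μ(L) = Σ_p (m_p - 1)²` (sum over points on at least two lines) satisfies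
`μ(L) ≤ d² - 4d + 7`; equivalently `(d-1)(d-2) + 1 - μ(L) ≥ d - 4 ≥ 1`. -/
theorem stmt_0 (d : ℕ) (hd : 5 ≤ d)
    (L : Finset (Submodule ℂ (Fin 3 → ℂ)))
    (hlines : ∀ W ∈ L, Module.finrank ℂ W = 2)
    (hcard : L.card = d)
    (hmult : ∀ p : Projectivization ℂ (Fin 3 → ℂ), lineMult L p < d - 1) :
    ∃ P : Finset (Projectivization ℂ (Fin 3 → ℂ)),
      (∀ p, p ∈ P ↔ 2 ≤ lineMult L p) ∧
      (∑ p ∈ P, ((lineMult L p : ℤ) - 1) ^ 2 ≤ (d : ℤ) ^ 2 - 4 * d + 7) ∧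
      ((d : ℤ) - 1) * ((d : ℤ) - 2) + 1 - ∑ p ∈ P, ((lineMult L p : ℤ) - 1) ^ 2
        ≥ (d : ℤ) - 4 ∧ (d : ℤ) - 4 ≥ 1 := by
  subst hcard
  have hI : Incidence.MeetsUniquely
      (fun (p : Projectivization ℂ (Fin 3 → ℂ)) W => p.submodule ≤ W) L :=
    fun W₁ h₁ W₂ h₂ => Projectivization.existsUnique_submodule_le_inf (by simp)
      (hlines W₁ h₁) (hlines W₂ h₂)
  have hfin := Incidence.finite_setOf_two_le_mult hI
  have hP : ∀ p, p ∈ hfin.toFinset ↔ 2 ≤ lineMult L p := fun _ => hfin.mem_toFinset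
  have hμ : ∑ p ∈ hfin.toFinset, ((lineMult L p : ℤ) - 1) ^ 2 ≤ (#L : ℤ) ^ 2 - 4 * #L + 7 :=
    Incidence.sum_sq_mult_sub_one_le hI hP hd hmult
  exact ⟨hfin.toFinset, hP, hμ, by nlinarith, by omega⟩
end

section
/- Let f = x·(x−z)·(xy−z²)·(x²−xz+xy−z²) ∈ ℂ[x,y,z], a reduced homogeneous polynomial of degree 6 defining the conic-line arrangement obtained from a pencil of conics of Type III by taking the 2 lines coming from the unique singular conic in the pencil together with two smooth members. Then the curve C : f = 0 is free with exponents (2,3): the module of Jacobian syzygies D₀(f) is a free ℂ[x,y,z]-module admitting a basis consisting of two homogeneous syzygies, one of degree 2 and one of degree 3. -/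
open MvPolynomial

/-- `v` is a Jacobian syzygy of `f`, i.e. an element of `D₀(f)`:
`v 0 · ∂f/∂x + v 1 · ∂f/∂y + v 2 · ∂f/∂z = 0`. -/
def IsSyzygy (f : MvPolynomial (Fin 3) ℂ) (v : Fin 3 → MvPolynomial (Fin 3) ℂ) : Prop :=
  v 0 * pderiv 0 f + v 1 * pderiv 1 f + v 2 * pderiv 2 f = 0

/-- A triple of polynomials is homogeneous of degree `r` if all three components are. -/
def IsHomTriple (v : Fin 3 → MvPolynomial (Fin 3) ℂ) (r : ℕ) : Prop :=
  ∀ i, (v i).IsHomogeneous r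

/-- The reduced curve `C : f = 0` of degree `d` is free with exponents `(d₁, d₂)`:
`D₀(f)` is a free module with a basis consisting of two homogeneous syzygies of degrees
`d₁` and `d₂` (every syzygy is uniquely a combination of the two basis elements). -/
def IsFreeWithExponents (f : MvPolynomial (Fin 3) ℂ) (d₁ d₂ : ℕ) : Prop :=
  ∃ r₁ r₂ : Fin 3 → MvPolynomial (Fin 3) ℂ,
    IsSyzygy f r₁ ∧ IsSyzygy f r₂ ∧ IsHomTriple r₁ d₁ ∧ IsHomTriple r₂ d₂ ∧
    ∀ v, IsSyzygy f v →
      ∃! ab : MvPolynomial (Fin 3) ℂ × MvPolynomial (Fin 3) ℂ,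
        v = ab.1 • r₁ + ab.2 • r₂

/-!
A cross-product form of Saito's criterion. The syzygies `r₂, r₃` of degrees 2 and 3 satisfy
`r₂ × r₃ = 4 ∇f`. For any syzygy `v`, the vector triple product expansion shows that `v × r₃` and
`r₂ × v` are parallel to `∇f`; they are polynomial multiples `μ ∇f`, `ν ∇f` because `24 (x - z)⁹`
lies in the Jacobian ideal while `x - z` is a prime not dividing `∂f/∂x`. Then
`v = (μ r₂ + ν r₃) / 4`, and crossing with `r₂` or `r₃` shows that the coefficients are unique.
-/

open Matrix

namespace MvPolynomial

variable {σ R : Type*} [CommSemiring R]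

noncomputable def grad (f : MvPolynomial σ R) : σ → MvPolynomial σ R := fun i => pderiv i f

theorem prime_X_zero_sub_X_succ {R : Type*} [CommRing R] [IsDomain R] {n : ℕ} (j : Fin n) :
    Prime (X 0 - X j.succ : MvPolynomial (Fin (n + 1)) R) := by
  rw [← MulEquiv.prime_iff (finSuccEquiv R n).toMulEquiv]
  simpa [finSuccEquiv_X_zero, finSuccEquiv_X_succ] using
    Polynomial.prime_X_sub_C (X j : MvPolynomial (Fin n) R)

theorem isHomogeneous_ofNat (c : ℕ) [c.AtLeastTwo] :
    (ofNat(c) : MvPolynomial σ R).IsHomogeneous 0 := by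
  simpa only [map_ofNat] using isHomogeneous_C σ (ofNat(c) : R)

theorem isUnit_ofNat {K : Type*} [Field K] [CharZero K] (c : ℕ) [c.AtLeastTwo] :
    IsUnit (ofNat(c) : MvPolynomial σ K) := by
  simpa only [map_ofNat] using (Ne.isUnit (OfNat.ofNat_ne_zero (R := K) c)).map (C (σ := σ))

namespace IsHomogeneous

variable {φ : MvPolynomial σ R} {n : ℕ}

theorem mul_X (hφ : φ.IsHomogeneous n) (i : σ) : (φ * X i).IsHomogeneous (n + 1) := by
  simpa using hφ.mul (isHomogeneous_X R i)

theorem mul_X_pow (hφ : φ.IsHomogeneous n) (i : σ) (k : ℕ) :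
    (φ * X i ^ k).IsHomogeneous (n + k) := by
  simpa using hφ.mul (isHomogeneous_X_pow i k)

end IsHomogeneous

end MvPolynomial

theorem isSyzygy_iff_dotProduct_grad (f : MvPolynomial (Fin 3) ℂ)
    (v : Fin 3 → MvPolynomial (Fin 3) ℂ) :
    IsSyzygy f v ↔ v ⬝ᵥ grad f = 0 := by
  rw [vec3_dotProduct]; rfl

section CrossProduct

variable {R : Type*} [CommRing R]

theorem cross_smul_add_smul_left (a b : R) (r₁ r₂ : Fin 3 → R) :
    (a • r₁ + b • r₂) ⨯₃ r₂ = a • (r₁ ⨯₃ r₂) := by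
  simp only [map_add, map_smul, LinearMap.add_apply, LinearMap.smul_apply, cross_self, smul_zero,
    add_zero]

theorem cross_smul_add_smul_right (a b : R) (r₁ r₂ : Fin 3 → R) :
    r₁ ⨯₃ (a • r₁ + b • r₂) = b • (r₁ ⨯₃ r₂) := by
  simp only [map_add, map_smul, cross_self, smul_zero, zero_add]

variable [IsDomain R]

theorem eq_zero_of_cross_eq_zero {r₁ r₂ w : Fin 3 → R} (h₂ : w ⨯₃ r₂ = 0) (h₁ : r₁ ⨯₃ w = 0)
    (h : r₁ ⨯₃ r₂ ≠ 0) : w = 0 := by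
  funext j
  have hparallel : r₂ j • w = w j • r₂ := by
    have := cross_cross_eq_smul_sub_smul' (Pi.single j 1) w r₂
    rwa [h₂, map_zero, single_one_dotProduct, dotProduct_single, mul_one, eq_comm,
      sub_eq_zero] at this
  have : w j • (r₁ ⨯₃ r₂) = 0 := by
    rw [← map_smul, ← hparallel, map_smul, h₁, smul_zero]
  exact (smul_eq_zero.mp this).resolve_right h

theorem exists_eq_smul_of_cross_eq_zero [DecompositionMonoid R] {g n c : Fin 3 → R} (i : Fin 3)
    (hg : g ⬝ᵥ n ≠ 0) (hcop : IsRelPrime (g ⬝ᵥ n) (n i)) (hc : c ⨯₃ n = 0) :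
    ∃ μ : R, c = μ • n := by
  have key : (g ⬝ᵥ n) • c = (c ⬝ᵥ g) • n := by
    have := cross_cross_eq_smul_sub_smul' g c n
    rwa [hc, map_zero, eq_comm, sub_eq_zero] at this
  obtain ⟨μ, hμ⟩ : g ⬝ᵥ n ∣ c ⬝ᵥ g :=
    hcop.dvd_of_dvd_mul_right ⟨c i, by simpa using (congrFun key i).symm⟩
  refine ⟨μ, smul_right_injective _ hg ?_⟩
  simp only [key, hμ, mul_smul]

theorem existsUnique_eq_smul_add_smul {n r₁ r₂ : Fin 3 → R} {u : R} (hu : IsUnit u) (hn : n ≠ 0)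
    (hr₁ : r₁ ⬝ᵥ n = 0) (hr₂ : r₂ ⬝ᵥ n = 0) (hcross : r₁ ⨯₃ r₂ = u • n)
    (hparallel : ∀ c : Fin 3 → R, c ⨯₃ n = 0 → ∃ μ : R, c = μ • n)
    {v : Fin 3 → R} (hv : v ⬝ᵥ n = 0) : ∃! ab : R × R, v = ab.1 • r₁ + ab.2 • r₂ := by
  obtain ⟨μ, hμ⟩ := hparallel (v ⨯₃ r₂) <| by
    rw [cross_cross_eq_smul_sub_smul, hv, hr₂, zero_smul, zero_smul, sub_zero]
  obtain ⟨ν, hν⟩ := hparallel (r₁ ⨯₃ v) <| by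
    rw [cross_cross_eq_smul_sub_smul, hr₁, hv, zero_smul, zero_smul, sub_zero]
  obtain ⟨u, rfl⟩ := hu
  have hcancel (a : R) : (↑u⁻¹ * a) • (r₁ ⨯₃ r₂) = a • n := by
    rw [hcross, smul_smul, mul_right_comm, Units.inv_mul, one_mul]
  refine ⟨(↑u⁻¹ * μ, ↑u⁻¹ * ν), ?_, ?_⟩
  · refine (sub_eq_zero.mp (eq_zero_of_cross_eq_zero (r₁ := r₁) (r₂ := r₂) ?_ ?_ ?_)).symm
    · rw [map_sub, LinearMap.sub_apply, cross_smul_add_smul_left, hcancel, hμ, sub_self]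
    · rw [map_sub, cross_smul_add_smul_right, hcancel, hν, sub_self]
    · exact hcross ▸ smul_ne_zero u.ne_zero hn
  · rintro ⟨a, b⟩ rfl
    rw [cross_smul_add_smul_left, hcross, smul_smul] at hμ
    rw [cross_smul_add_smul_right, hcross, smul_smul] at hν
    simp only [← smul_left_injective R hn hμ, ← smul_left_injective R hn hν, mul_comm a,
      mul_comm b, Units.inv_mul_cancel_left]

end CrossProduct

namespace ConicLineArrangement

noncomputable section

def poly : MvPolynomial (Fin 3) ℂ :=
  X 0 * (X 0 - X 2) * (X 0 * X 1 - X 2 ^ 2) * (X 0 ^ 2 - X 0 * X 2 + X 0 * X 1 - X 2 ^ 2)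

def gradVec : Fin 3 → MvPolynomial (Fin 3) ℂ :=
  ![5 * X 0 ^ 4 * X 1 + 4 * X 0 ^ 3 * X 1 ^ 2 - 8 * X 0 ^ 3 * X 1 * X 2 - 4 * X 0 ^ 3 * X 2 ^ 2
      - 3 * X 0 ^ 2 * X 1 ^ 2 * X 2 - 3 * X 0 ^ 2 * X 1 * X 2 ^ 2 + 6 * X 0 ^ 2 * X 2 ^ 3
      + 4 * X 0 * X 1 * X 2 ^ 3 - X 2 ^ 5,
    X 0 ^ 5 + 2 * X 0 ^ 4 * X 1 - 2 * X 0 ^ 4 * X 2 - 2 * X 0 ^ 3 * X 1 * X 2 - X 0 ^ 3 * X 2 ^ 2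
      + 2 * X 0 ^ 2 * X 2 ^ 3,
    -2 * X 0 ^ 4 * X 1 - 2 * X 0 ^ 4 * X 2 - X 0 ^ 3 * X 1 ^ 2 - 2 * X 0 ^ 3 * X 1 * X 2
      + 6 * X 0 ^ 3 * X 2 ^ 2 + 6 * X 0 ^ 2 * X 1 * X 2 ^ 2 - 5 * X 0 * X 2 ^ 4]

theorem grad_poly : grad poly = gradVec := by
  funext i
  fin_cases i <;> simp [grad, poly, gradVec] <;> ring

theorem not_dvd_gradVec_zero : ¬ (X 0 - X 2) ∣ gradVec 0 := by
  rintro ⟨t, ht⟩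
  have := congrArg (eval ![1, 0, 1]) ht
  norm_num [gradVec, cons_val_two, head_cons, tail_cons] at this

theorem gradVec_ne_zero : gradVec ≠ 0 := by
  intro h
  have := congrArg (eval ![1, 0, 0]) (congrFun h 1)
  norm_num [gradVec, cons_val_two, head_cons, tail_cons] at this

def syzygy₂ : Fin 3 → MvPolynomial (Fin 3) ℂ :=
  ![X 0 ^ 2, -X 0 * X 1 + 4 * X 0 * X 2 - 2 * X 2 ^ 2, 2 * X 0 ^ 2 - X 0 * X 2]

def syzygy₃ : Fin 3 → MvPolynomial (Fin 3) ℂ :=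
  ![2 * X 0 ^ 3 + 4 * X 0 ^ 2 * X 1 - 3 * X 0 ^ 2 * X 2 - 10 * X 0 * X 2 ^ 2,
    -10 * X 0 ^ 2 * X 1 - 8 * X 0 * X 1 ^ 2 + 11 * X 0 * X 1 * X 2 + 8 * X 0 * X 2 ^ 2
      + 26 * X 1 * X 2 ^ 2 - 34 * X 2 ^ 3,
    4 * X 0 * X 1 * X 2 - 13 * X 0 * X 2 ^ 2 + 2 * X 2 ^ 3]

/-- Both singular points `(0:1:0)` and `(1:1:1)` of the curve lie on the line `x = z`, so by the
Nullstellensatz a power of `x - z` lies in the Jacobian ideal. -/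
def bezoutVec : Fin 3 → MvPolynomial (Fin 3) ℂ :=
  ![-1494 * X 0 ^ 4 - 3132 * X 0 ^ 3 * X 1 + 3048 * X 0 ^ 3 * X 2 - 360 * X 0 ^ 2 * X 1 ^ 2
      + 3252 * X 0 ^ 2 * X 1 * X 2 + 1056 * X 0 ^ 2 * X 2 ^ 2 - 40 * X 0 * X 1 ^ 3
      + 300 * X 0 * X 1 ^ 2 * X 2 - 84 * X 0 * X 1 * X 2 ^ 2 - 2231 * X 0 * X 2 ^ 3 + 24 * X 2 ^ 4,
    24 * X 0 ^ 4 + 7422 * X 0 ^ 3 * X 1 - 168 * X 0 ^ 3 * X 2 + 6792 * X 0 ^ 2 * X 1 ^ 2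
      - 11964 * X 0 ^ 2 * X 1 * X 2 - 5424 * X 0 ^ 2 * X 2 ^ 2 + 744 * X 0 * X 1 ^ 3
      - 5634 * X 0 * X 1 ^ 2 * X 2 - 3900 * X 0 * X 1 * X 2 ^ 2 + 8076 * X 0 * X 2 ^ 3
      + 56 * X 1 ^ 4 - 540 * X 1 ^ 3 * X 2 - 84 * X 1 ^ 2 * X 2 ^ 2 + 4915 * X 1 * X 2 ^ 3 + 24 * X 2 ^ 4,
    -48 * X 0 * X 1 ^ 3 + 8 * X 1 ^ 3 * X 2 - 60 * X 1 ^ 2 * X 2 ^ 2 + 36 * X 1 * X 2 ^ 3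
      + 403 * X 2 ^ 4]

theorem syzygy₂_dotProduct : syzygy₂ ⬝ᵥ gradVec = 0 := by
  simp only [vec3_dotProduct, syzygy₂, gradVec, cons_val_zero, cons_val_one, cons_val_two,
    head_cons, tail_cons]
  ring

theorem syzygy₃_dotProduct : syzygy₃ ⬝ᵥ gradVec = 0 := by
  simp only [vec3_dotProduct, syzygy₃, gradVec, cons_val_zero, cons_val_one, cons_val_two,
    head_cons, tail_cons]
  ring

theorem syzygy₂_cross_syzygy₃ : syzygy₂ ⨯₃ syzygy₃ = (4 : MvPolynomial (Fin 3) ℂ) • gradVec := by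
  simp only [cross_apply, syzygy₂, syzygy₃, gradVec, cons_val_zero, cons_val_one, cons_val_two,
    head_cons, tail_cons, smul_cons, smul_empty, smul_eq_mul]
  refine vec3_eq ?_ ?_ ?_ <;> ring

theorem bezoutVec_dotProduct : bezoutVec ⬝ᵥ gradVec = 24 * (X 0 - X 2) ^ 9 := by
  simp only [vec3_dotProduct, bezoutVec, gradVec, cons_val_zero, cons_val_one, cons_val_two,
    head_cons, tail_cons]
  ring

theorem isRelPrime_gradVec_zero : IsRelPrime (24 * (X 0 - X 2) ^ 9) (gradVec 0) := by
  have hL : Prime (X 0 - X 2 : MvPolynomial (Fin 3) ℂ) := prime_X_zero_sub_X_succ 1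
  rw [isRelPrime_mul_unit_left_left (isUnit_ofNat 24)]
  exact (hL.irreducible.isRelPrime_iff_not_dvd.2 not_dvd_gradVec_zero).pow_left

theorem exists_eq_smul_gradVec_of_cross_eq_zero {c : Fin 3 → MvPolynomial (Fin 3) ℂ}
    (hc : c ⨯₃ gradVec = 0) : ∃ μ : MvPolynomial (Fin 3) ℂ, c = μ • gradVec := by
  refine exists_eq_smul_of_cross_eq_zero (g := bezoutVec) 0 ?_ ?_ hc <;> rw [bezoutVec_dotProduct]
  · exact mul_ne_zero (by norm_num) (pow_ne_zero _ (prime_X_zero_sub_X_succ 1).ne_zero)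
  · exact isRelPrime_gradVec_zero

theorem isHomTriple_syzygy₂ : IsHomTriple syzygy₂ 2 := by
  intro i
  fin_cases i <;>
    simp only [syzygy₂, Fin.zero_eta, Fin.mk_one, Fin.reduceFinMk, cons_val_zero, cons_val_one,
      cons_val_two, head_cons, tail_cons] <;>
    apply_rules (transparency := .instances) [IsHomogeneous.add, IsHomogeneous.sub,
      IsHomogeneous.neg, IsHomogeneous.mul_X, IsHomogeneous.mul_X_pow, isHomogeneous_X,
      isHomogeneous_X_pow, isHomogeneous_ofNat]

theorem isHomTriple_syzygy₃ : IsHomTriple syzygy₃ 3 := by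
  intro i
  fin_cases i <;>
    simp only [syzygy₃, Fin.zero_eta, Fin.mk_one, Fin.reduceFinMk, cons_val_zero, cons_val_one,
      cons_val_two, head_cons, tail_cons] <;>
    apply_rules (transparency := .instances) [IsHomogeneous.add, IsHomogeneous.sub,
      IsHomogeneous.neg, IsHomogeneous.mul_X, IsHomogeneous.mul_X_pow, isHomogeneous_X,
      isHomogeneous_X_pow, isHomogeneous_ofNat]

end

end ConicLineArrangement

open ConicLineArrangement in
/-- The conic-line arrangement
`C : x·(x−z)·(xy−z²)·(x²−xz+xy−z²) = 0`, obtained from a pencil of conics of Type III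
by taking the 2 lines coming from the unique singular conic together with two smooth
members, is a free curve with exponents `(2, 3)`. -/
theorem stmt_5 :
    IsFreeWithExponents
      (X 0 * (X 0 - X 2) * (X 0 * X 1 - X 2 ^ 2) *
        (X 0 ^ 2 - X 0 * X 2 + X 0 * X 1 - X 2 ^ 2)) 2 3 := by
  have hsyz (v : Fin 3 → MvPolynomial (Fin 3) ℂ) : IsSyzygy poly v ↔ v ⬝ᵥ gradVec = 0 := by
    rw [isSyzygy_iff_dotProduct_grad, grad_poly]
  refine ⟨syzygy₂, syzygy₃, (hsyz _).2 syzygy₂_dotProduct, (hsyz _).2 syzygy₃_dotProduct,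
    isHomTriple_syzygy₂, isHomTriple_syzygy₃, fun v hv => ?_⟩
  exact existsUnique_eq_smul_add_smul (isUnit_ofNat 4) gradVec_ne_zero syzygy₂_dotProduct
    syzygy₃_dotProduct syzygy₂_cross_syzygy₃ (fun _ => exists_eq_smul_gradVec_of_cross_eq_zero)
    ((hsyz v).1 hv)
end

section
/- Let G be the subgroup of GL₃(ℂ) generated by the diagonal matrix n = diag(1, ω, ω²) and the six 3×3 permutation matrices (so G is a semidirect product N ⋊ S₃ with N = ⟨n⟩ cyclic of order 3). Then for every λ ∈ ℂ, G acts transitively on the nine points p₁(λ), …, p₉(λ) up to scalar: for all j, k ∈ {1, …, 9} there exist g ∈ G and a nonzero scalar c ∈ ℂ with g · p_j(λ) = c · p_k(λ) in ℂ³. -/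
/-- Representative vectors in `ℂ³` of the nine points `p_k(λ)` of `𝒫₉(λ)`;
the index `k : Fin 9` corresponds to `p_{k+1}(λ)` of the paper. -/
noncomputable def hessePoint (ω lam : ℂ) : Fin 9 → Fin 3 → ℂ :=
  ![![lam, 1, 1], ![1, lam, 1], ![1, 1, lam],
    ![lam, ω, ω ^ 2], ![ω ^ 2, lam, ω], ![ω, ω ^ 2, lam],
    ![lam, ω ^ 2, ω], ![ω, lam, ω ^ 2], ![ω ^ 2, ω, lam]]

/-- The subgroup `G = N ⋊ S₃` of `GL₃(ℂ)` generated by the diagonal matrix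
`n = diag(1, ω, ω²)` and the six `3 × 3` permutation matrices. -/
def hesseGroup (ω : ℂ) : Subgroup (GL (Fin 3) ℂ) :=
  Subgroup.closure
    {g : GL (Fin 3) ℂ |
      (g : Matrix (Fin 3) (Fin 3) ℂ) = Matrix.diagonal ![1, ω, ω ^ 2] ∨
      ∃ σ : Equiv.Perm (Fin 3), (g : Matrix (Fin 3) (Fin 3) ℂ) = σ.permMatrix ℂ}

/-!
Up to a nonzero scalar, `n = diag(1, ω, ω²)` maps `p_k` to `p_{k+3}` (indices mod 9, with
scalar `ω^((k-1) mod 3)`), while the transposition matrices exchanging the first coordinate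
with the second or third map `p₁` to `p₂` and `p₃`. Hence every point is reached from `p₁`,
and "related by an element of `G` up to a nonzero scalar" is an equivalence relation.
-/

open Matrix

section

variable {n K : Type*} [Fintype n] [DecidableEq n] [Field K]

def RelatedUpToScalar (H : Subgroup (GL n K)) (v w : n → K) : Prop :=
  ∃ g ∈ H, ∃ c : K, c ≠ 0 ∧ (g : Matrix n n K) *ᵥ v = c • w

namespace RelatedUpToScalar

variable {H : Subgroup (GL n K)} {u v w : n → K}

lemma refl (v : n → K) : RelatedUpToScalar H v v :=
  ⟨1, H.one_mem, 1, one_ne_zero, by simp⟩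

lemma symm (h : RelatedUpToScalar H v w) : RelatedUpToScalar H w v := by
  obtain ⟨g, hg, c, hc, hgv⟩ := h
  refine ⟨g⁻¹, inv_mem hg, c⁻¹, inv_ne_zero hc, ?_⟩
  calc ((g⁻¹ : GL n K) : Matrix n n K) *ᵥ w
      = c⁻¹ • ((g⁻¹ : GL n K) : Matrix n n K) *ᵥ ((g : Matrix n n K) *ᵥ v) := by
        rw [hgv, mulVec_smul, smul_smul, inv_mul_cancel₀ hc, one_smul]
    _ = c⁻¹ • v := by simp [mulVec_mulVec]

lemma trans (h₁ : RelatedUpToScalar H u v) (h₂ : RelatedUpToScalar H v w) :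
    RelatedUpToScalar H u w := by
  obtain ⟨g, hg, c, hc, hgu⟩ := h₁
  obtain ⟨g', hg', c', hc', hgv⟩ := h₂
  refine ⟨g' * g, mul_mem hg' hg, c' * c, mul_ne_zero hc' hc, ?_⟩
  rw [Units.val_mul, ← mulVec_mulVec, hgu, mulVec_smul, hgv, smul_smul, mul_comm]

end RelatedUpToScalar

end

section HesseGroup

variable {ω : ℂ}

lemma relatedUpToScalar_of_diagonal_mulVec (hω : ω ^ 3 = 1) {v w : Fin 3 → ℂ} {c : ℂ}
    (hc : c ≠ 0) (h : diagonal ![1, ω, ω ^ 2] *ᵥ v = c • w) :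
    RelatedUpToScalar (hesseGroup ω) v w := by
  have hdet : (diagonal ![1, ω, ω ^ 2]).det ≠ 0 := by
    simp [Fin.prod_univ_three, ← pow_succ', hω]
  exact ⟨.mkOfDetNeZero _ hdet, Subgroup.subset_closure (Or.inl rfl), c, hc, h⟩

lemma relatedUpToScalar_of_permMatrix_mulVec (σ : Equiv.Perm (Fin 3)) {v w : Fin 3 → ℂ}
    (h : σ.permMatrix ℂ *ᵥ v = w) : RelatedUpToScalar (hesseGroup ω) v w := by
  have hdet : (σ.permMatrix ℂ).det ≠ 0 := by simp
  exact ⟨.mkOfDetNeZero _ hdet, Subgroup.subset_closure (Or.inr ⟨σ, rfl⟩), 1, one_ne_zero,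
    by rw [one_smul]; exact h⟩

lemma diagonal_mulVec_hessePoint (hω : ω ^ 3 = 1) (lam : ℂ) (k : Fin 9) :
    diagonal ![1, ω, ω ^ 2] *ᵥ hessePoint ω lam k =
      ω ^ (k.val % 3) • hessePoint ω lam (k + 3) := by
  ext i
  fin_cases k <;> fin_cases i <;> simp [hessePoint, mulVec_diagonal] <;> grind

lemma swap_mulVec_hessePoint_zero (lam : ℂ) (i : Fin 3) :
    (Equiv.swap 0 i).permMatrix ℂ *ᵥ hessePoint ω lam 0 =
      hessePoint ω lam (i.castLE (by norm_num)) := by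
  ext m
  fin_cases i <;> fin_cases m <;> simp [hessePoint, permMatrix_mulVec, Equiv.swap_apply_def]

lemma relatedUpToScalar_hessePoint_add_three (hω : ω ^ 3 = 1) (lam : ℂ) (k : Fin 9) :
    RelatedUpToScalar (hesseGroup ω) (hessePoint ω lam k) (hessePoint ω lam (k + 3)) :=
  relatedUpToScalar_of_diagonal_mulVec hω
    (pow_ne_zero _ (IsUnit.of_pow_eq_one hω three_ne_zero).ne_zero)
    (diagonal_mulVec_hessePoint hω lam k)

lemma relatedUpToScalar_hessePoint_zero (hω : ω ^ 3 = 1) (lam : ℂ) (k : Fin 9) :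
    RelatedUpToScalar (hesseGroup ω) (hessePoint ω lam 0) (hessePoint ω lam k) := by
  have hn := relatedUpToScalar_hessePoint_add_three hω lam
  have hs (i : Fin 3) := relatedUpToScalar_of_permMatrix_mulVec (ω := ω) _
    (swap_mulVec_hessePoint_zero (ω := ω) lam i)
  fin_cases k
  · exact .refl _
  · exact hs 1
  · exact hs 2
  · exact hn 0
  · exact (hs 1).trans (hn 1)
  · exact (hs 2).trans (hn 2)
  · exact (hn 0).trans (hn 3)
  · exact ((hs 1).trans (hn 1)).trans (hn 4)
  · exact ((hs 2).trans (hn 2)).trans (hn 5)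

end HesseGroup

/-- For every `λ ∈ ℂ`, the group `G = ⟨diag(1,ω,ω²)⟩ ⋊ S₃ ≤ GL₃(ℂ)`
acts transitively on the nine points `p₁(λ), …, p₉(λ)` up to scalar: for all `j, k`
there are `g ∈ G` and a nonzero scalar `c ∈ ℂ` with `g · p_j(λ) = c · p_k(λ)` in `ℂ³`. -/
theorem stmt_19 (ω : ℂ) (hω : ω ^ 2 + ω + 1 = 0) (lam : ℂ) (j k : Fin 9) :
    ∃ g ∈ hesseGroup ω, ∃ c : ℂ, c ≠ 0 ∧
      (g : Matrix (Fin 3) (Fin 3) ℂ).mulVec (hessePoint ω lam j) =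
        c • hessePoint ω lam k := by
  have hω3 : ω ^ 3 = 1 := by linear_combination (ω - 1) * hω
  exact (relatedUpToScalar_hessePoint_zero hω3 lam j).symm.trans
    (relatedUpToScalar_hessePoint_zero hω3 lam k)
end
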